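/- Let $k$ be a positive integer, $0<\mu<2k$, $\mu'=\mu/k$. There exists $C>0$ such that for all $x,y,\xi,\eta\in\mathbb{R}^n$ with $|\xi|\le 1$, $|\eta|\le 1/2$, and $\langle x\rangle^{2k}\langle y\rangle^{-\mu}\le 2^{-k}$: $|\xi|^{2k} \le C\,\big(1+\langle\xi\rangle^2\langle x\rangle^{-\mu'}|x-y|^2+\langle x\rangle^2|\xi-\eta|^2\big)^{2k}\big(|\eta|^{2k}+\langle y\rangle^{-\mu}\big)$. -/
import Mathlib


/-- Japanese bracket `⟨x⟩ = (1+|x|²)^{1/2}`. -/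
noncomputable def jb {n : ℕ} (x : EuclideanSpace ℝ (Fin n)) : ℝ :=
  Real.sqrt (1 + ‖x‖ ^ 2)

lemma one_le_jb {n : ℕ} (x : EuclideanSpace ℝ (Fin n)) : 1 ≤ jb x := by
  rw [jb, Real.one_le_sqrt]; nlinarith [sq_nonneg ‖x‖]

lemma norm_le_jb {n : ℕ} (x : EuclideanSpace ℝ (Fin n)) : ‖x‖ ≤ jb x := by
  rw [jb, show ‖x‖ = Real.sqrt (‖x‖^2) by rw [Real.sqrt_sq (norm_nonneg x)]]
  exact Real.sqrt_le_sqrt (by nlinarith [Real.sq_sqrt (by positivity : (0:ℝ) ≤ ‖x‖^2)])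

lemma jb_le_one_add {n : ℕ} (x : EuclideanSpace ℝ (Fin n)) : jb x ≤ 1 + ‖x‖ := by
  rw [jb, show (1:ℝ) + ‖x‖ = Real.sqrt ((1+‖x‖)^2) by
    rw [Real.sqrt_sq (by positivity)]]
  exact Real.sqrt_le_sqrt (by nlinarith [norm_nonneg x])

theorem stmt9 {n : ℕ} (k : ℕ) (hk : 0 < k) (μ : ℝ) (hμ0 : 0 < μ) (hμ : μ < 2 * k) :
    ∃ C > (0 : ℝ), ∀ x y ξ η : EuclideanSpace ℝ (Fin n),
      ‖ξ‖ ≤ 1 → ‖η‖ ≤ 1 / 2 →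
      jb x ^ (2 * (k : ℝ)) * jb y ^ (-μ) ≤ 2 ^ (-(k : ℝ)) →
      ‖ξ‖ ^ (2 * (k : ℝ)) ≤
        C * (1 + jb ξ ^ 2 * jb x ^ (-(μ / k)) * ‖x - y‖ ^ 2 + jb x ^ 2 * ‖ξ - η‖ ^ 2) ^ (2 * k)
          * (‖η‖ ^ (2 * (k : ℝ)) + jb y ^ (-μ)) := by
  have hk' : (0:ℝ) < k := by exact_mod_cast hk
  refine ⟨8 ^ μ + 2 ^ (8 * k), by positivity, ?_⟩
  intro x y ξ η hξ hη hxy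
  have hX1 : 1 ≤ jb x := one_le_jb x
  have hY1 : 1 ≤ jb y := one_le_jb y
  have hX0 : (0:ℝ) < jb x := lt_of_lt_of_le one_pos hX1
  have hY0 : (0:ℝ) < jb y := lt_of_lt_of_le one_pos hY1
  have hcast : (2 * (k:ℝ)) = ((2*k : ℕ) : ℝ) := by push_cast; ring
  rw [hcast, Real.rpow_natCast, Real.rpow_natCast]
  rw [hcast, Real.rpow_natCast] at hxy
  set X := jb x with hXdef
  set Y := jb y with hYdef
  set D := 1 + jb ξ ^ 2 * X ^ (-(μ / k)) * ‖x - y‖ ^ 2 + X ^ 2 * ‖ξ - η‖ ^ 2 with hDdef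
  have hXm : (0:ℝ) < X ^ (-(μ / k)) := Real.rpow_pos_of_pos hX0 _
  have hYm : (0:ℝ) < Y ^ (-μ) := Real.rpow_pos_of_pos hY0 _
  have hjbξ : 1 ≤ jb ξ := one_le_jb ξ
  have hr0 : (0:ℝ) ≤ ‖x - y‖ := norm_nonneg _
  have hs0 : (0:ℝ) ≤ ‖ξ - η‖ := norm_nonneg _
  have hD1 : (1:ℝ) ≤ D := by
    have h1 : (0:ℝ) ≤ jb ξ ^ 2 * X ^ (-(μ / k)) * ‖x - y‖ ^ 2 := by positivity
    have h2 : (0:ℝ) ≤ X ^ 2 * ‖ξ - η‖ ^ 2 := by positivity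
    simp only [hDdef]; linarith
  have hD0 : (0:ℝ) < D := lt_of_lt_of_le one_pos hD1
  have hD2k1 : (1:ℝ) ≤ D ^ (2*k) := one_le_pow₀ hD1
  have h8p : (0:ℝ) < 8 ^ μ := by positivity
  have h2p : (0:ℝ) < 2 ^ (8*k) := by positivity
  have hη2k : (0:ℝ) ≤ ‖η‖ ^ (2*k) := by positivity
  have hlast : ∀ c : ℝ, 0 ≤ c → c ≤ 8^μ + 2^(8*k) →
      ∀ u : ℝ, 0 ≤ u → u ≤ ‖η‖^(2*k) + Y^(-μ) →
      c * u ≤ (8^μ + 2^(8*k)) * D^(2*k) * (‖η‖^(2*k) + Y^(-μ)) := by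
    intro c hc hcC u hu huv
    calc c * u ≤ (8^μ + 2^(8*k)) * (‖η‖^(2*k) + Y^(-μ)) :=
          mul_le_mul hcC huv hu (by positivity)
      _ = (8^μ + 2^(8*k)) * 1 * (‖η‖^(2*k) + Y^(-μ)) := by ring
      _ ≤ (8^μ + 2^(8*k)) * D^(2*k) * (‖η‖^(2*k) + Y^(-μ)) := by
          refine mul_le_mul_of_nonneg_right ?_ (by positivity)
          exact mul_le_mul_of_nonneg_left hD2k1 (by positivity)
  rcases le_or_gt Y 8 with h8 | h8
  · -- Case 1 : Y bounded
    have h8Y : (8:ℝ)^(-μ) ≤ Y^(-μ) :=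
      Real.rpow_le_rpow_of_nonpos hY0 h8 (neg_nonpos.mpr hμ0.le)
    have hξ1 : ‖ξ‖^(2*k) ≤ 1 := pow_le_one₀ (norm_nonneg _) hξ
    have h8μ : (8:ℝ)^μ * 8^(-μ) = 1 := by
      rw [← Real.rpow_add (by norm_num)]; simp
    calc ‖ξ‖^(2*k) ≤ 1 := hξ1
      _ = 8^μ * 8^(-μ) := h8μ.symm
      _ ≤ 8^μ * Y^(-μ) := mul_le_mul_of_nonneg_left h8Y h8p.le
      _ ≤ (8^μ + 2^(8*k)) * D^(2*k) * (‖η‖^(2*k) + Y^(-μ)) :=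
          hlast _ h8p.le (by linarith) _ hYm.le (by linarith)
  · -- Case 2 : Y large; first derive X ≤ (3/4) Y
    have hYμpos : (0:ℝ) < Y ^ μ := Real.rpow_pos_of_pos hY0 _
    have e3 : Y ^ (-μ) = (Y ^ μ)⁻¹ := Real.rpow_neg hY0.le μ
    have e2 : (2:ℝ) ^ (-(k:ℝ)) = ((2:ℝ)^k)⁻¹ := by
      rw [Real.rpow_neg (by norm_num), Real.rpow_natCast]
    have e1 : X ^ (2*k) ≤ ((2:ℝ)^k)⁻¹ * Y ^ μ := by
      rw [e3, e2] at hxy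
      have h := mul_le_mul_of_nonneg_right hxy hYμpos.le
      rwa [mul_assoc, inv_mul_cancel₀ hYμpos.ne', mul_one] at h
    have e4 : Y ^ μ ≤ Y ^ (2*k) := by
      rw [← Real.rpow_natCast Y (2*k)]
      exact Real.rpow_le_rpow_of_exponent_le hY1 (by push_cast; linarith)
    have e5 : X ^ (2*k) ≤ ((2:ℝ)^k)⁻¹ * Y ^ (2*k) :=
      e1.trans (mul_le_mul_of_nonneg_left e4 (by positivity))
    have e6 : ((2:ℝ)^k)⁻¹ * Y ^ (2*k) ≤ (3/4*Y) ^ (2*k) := by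
      rw [mul_pow, show (3/4:ℝ)^(2*k) = ((9:ℝ)/16)^k by rw [pow_mul]; norm_num,
        ← inv_pow]
      exact mul_le_mul_of_nonneg_right
        (pow_le_pow_left₀ (by norm_num) (by norm_num) k) (by positivity)
    have hX34 : X ≤ 3/4 * Y :=
      le_of_pow_le_pow_left₀ (by positivity) (by positivity) (e5.trans e6)
    have hr : Y/8 ≤ ‖x - y‖ := by
      have h1 : Y - 1 ≤ ‖y‖ := by have := jb_le_one_add y; linarith
      have h2 : ‖x‖ ≤ X := norm_le_jb x
      have h3 : ‖y‖ - ‖x‖ ≤ ‖x - y‖ := by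
        rw [norm_sub_rev]; exact norm_sub_norm_le y x
      linarith
    rcases le_or_gt ‖ξ‖ (2*‖η‖) with hab | hab
    · -- ξ controlled by η
      calc ‖ξ‖^(2*k) ≤ (2*‖η‖)^(2*k) := pow_le_pow_left₀ (norm_nonneg ξ) hab _
        _ = 2^(2*k) * ‖η‖^(2*k) := mul_pow 2 ‖η‖ (2*k)
        _ ≤ 2^(8*k) * ‖η‖^(2*k) := by
            refine mul_le_mul_of_nonneg_right ?_ hη2k
            exact pow_le_pow_right₀ (by norm_num) (by omega)
        _ ≤ (8^μ + 2^(8*k)) * D^(2*k) * (‖η‖^(2*k) + Y^(-μ)) :=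
            hlast _ h2p.le (by linarith) _ hη2k (by linarith)
    · -- main case
      have hs : ‖ξ‖/2 ≤ ‖ξ - η‖ := by
        have := norm_sub_norm_le ξ η; linarith
      have hA : X^(-(μ/k)) * ‖x-y‖^2 ≤ D := by
        have h1 : X^(-(μ/k)) * ‖x-y‖^2 ≤ jb ξ ^ 2 * X ^ (-(μ / k)) * ‖x - y‖ ^ 2 := by
          have h0 : (1:ℝ) ≤ jb ξ ^ 2 := one_le_pow₀ hjbξ
          have h0' : (0:ℝ) ≤ X^(-(μ/k)) * ‖x-y‖^2 := by positivity
          calc X^(-(μ/k)) * ‖x-y‖^2 = 1 * (X^(-(μ/k)) * ‖x-y‖^2) := (one_mul _).symm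
            _ ≤ jb ξ ^ 2 * (X^(-(μ/k)) * ‖x-y‖^2) := mul_le_mul_of_nonneg_right h0 h0'
            _ = jb ξ ^ 2 * X ^ (-(μ / k)) * ‖x - y‖ ^ 2 := (mul_assoc _ _ _).symm
        have h2 : (0:ℝ) ≤ X ^ 2 * ‖ξ - η‖ ^ 2 := by positivity
        simp only [hDdef]; linarith
      have hB : X^2 * ‖ξ-η‖^2 ≤ D := by
        have h1 : (0:ℝ) ≤ jb ξ ^ 2 * X ^ (-(μ / k)) * ‖x - y‖ ^ 2 := by positivity
        simp only [hDdef]; linarith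
      have hprod : (X^(-(μ/k)) * ‖x-y‖^2) * (X^2 * ‖ξ-η‖^2) ≤ D^2 := by
        calc (X^(-(μ/k)) * ‖x-y‖^2) * (X^2 * ‖ξ-η‖^2) ≤ D * D :=
              mul_le_mul hA hB (by positivity) hD0.le
          _ = D^2 := (sq D).symm
      have hDpow : ((X^(-(μ/k)) * ‖x-y‖^2) * (X^2 * ‖ξ-η‖^2))^k ≤ D^(2*k) := by
        rw [pow_mul]
        exact pow_le_pow_left₀ (by positivity) hprod k
      have hsplit : ((X^(-(μ/k)) * ‖x-y‖^2) * (X^2 * ‖ξ-η‖^2))^k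
          = (X^(-μ) * X^(2*k)) * (‖x-y‖^(2*k) * ‖ξ-η‖^(2*k)) := by
        have hXk : (X^(-(μ/k)))^k = X^(-μ) := by
          rw [← Real.rpow_natCast (X^(-(μ/k))) k, ← Real.rpow_mul hX0.le]
          congr 1
          field_simp
        rw [mul_pow, mul_pow, mul_pow, hXk, ← pow_mul, ← pow_mul, ← pow_mul]
        ring_nf
      have hXfac : (1:ℝ) ≤ X^(-μ) * X^(2*k) := by
        rw [← Real.rpow_natCast X (2*k), ← Real.rpow_add hX0]
        refine Real.one_le_rpow hX1 (by push_cast; linarith)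
      have hrs : ‖x-y‖^(2*k) * ‖ξ-η‖^(2*k) ≤ D^(2*k) := by
        have hnn : (0:ℝ) ≤ ‖x-y‖^(2*k) * ‖ξ-η‖^(2*k) := by positivity
        calc ‖x-y‖^(2*k) * ‖ξ-η‖^(2*k)
            = 1 * (‖x-y‖^(2*k) * ‖ξ-η‖^(2*k)) := (one_mul _).symm
          _ ≤ (X^(-μ) * X^(2*k)) * (‖x-y‖^(2*k) * ‖ξ-η‖^(2*k)) :=
              mul_le_mul_of_nonneg_right hXfac hnn
          _ = ((X^(-(μ/k)) * ‖x-y‖^2) * (X^2 * ‖ξ-η‖^2))^k := hsplit.symm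
          _ ≤ D^(2*k) := hDpow
      have hYfac : (1:ℝ) ≤ Y^(-μ) * Y^(2*k) := by
        rw [← Real.rpow_natCast Y (2*k), ← Real.rpow_add hY0]
        refine Real.one_le_rpow hY1 (by push_cast; linarith)
      have hlow : (Y/8)^(2*k) * (‖ξ‖/2)^(2*k) ≤ D^(2*k) := by
        refine le_trans ?_ hrs
        exact mul_le_mul (pow_le_pow_left₀ (by positivity) hr _)
          (pow_le_pow_left₀ (by positivity) hs _) (by positivity) (by positivity)
      have hkey : ‖ξ‖^(2*k) ≤ 2^(8*k) * (D^(2*k) * Y^(-μ)) := by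
        have h16 : (2:ℝ)^(8*k) = 16^(2*k) := by
          rw [show (16:ℝ) = 2^4 by norm_num, ← pow_mul]
          congr 1; ring
        have hident : Y^(2*k) * ‖ξ‖^(2*k) = 16^(2*k) * ((Y/8)^(2*k) * (‖ξ‖/2)^(2*k)) := by
          rw [← mul_pow, ← mul_pow, ← mul_pow]
          congr 1; ring
        calc ‖ξ‖^(2*k) = 1 * ‖ξ‖^(2*k) := (one_mul _).symm
          _ ≤ (Y^(-μ) * Y^(2*k)) * ‖ξ‖^(2*k) :=
              mul_le_mul_of_nonneg_right hYfac (by positivity)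
          _ = Y^(-μ) * (Y^(2*k) * ‖ξ‖^(2*k)) := by ring
          _ = Y^(-μ) * (16^(2*k) * ((Y/8)^(2*k) * (‖ξ‖/2)^(2*k))) := by rw [hident]
          _ ≤ Y^(-μ) * (16^(2*k) * D^(2*k)) := by
              refine mul_le_mul_of_nonneg_left ?_ hYm.le
              exact mul_le_mul_of_nonneg_left hlow (by positivity)
          _ = 2^(8*k) * (D^(2*k) * Y^(-μ)) := by rw [h16]; ring
      have hDk0 : (0:ℝ) ≤ D^(2*k) := by positivity
      have hm1 : (2:ℝ)^(8*k) ≤ 8^μ + 2^(8*k) := by linarith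
      have hm2 : D^(2*k) * Y^(-μ) ≤ D^(2*k) * (‖η‖^(2*k) + Y^(-μ)) :=
        mul_le_mul_of_nonneg_left (by linarith) hDk0
      have hm0 : (0:ℝ) ≤ D^(2*k) * Y^(-μ) := mul_nonneg hDk0 hYm.le
      calc ‖ξ‖^(2*k) ≤ 2^(8*k) * (D^(2*k) * Y^(-μ)) := hkey
        _ ≤ (8^μ + 2^(8*k)) * (D^(2*k) * (‖η‖^(2*k) + Y^(-μ))) :=
            mul_le_mul hm1 hm2 hm0 (by linarith)
        _ = (8^μ + 2^(8*k)) * D^(2*k) * (‖η‖^(2*k) + Y^(-μ)) := (mul_assoc _ _ _).symm
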